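/- (Bound on the number of validators) Suppose θ·Δ_j > Σ_{i=1}^{n} α(v_i, s_j) for every SSP s_j, and suppose strong shared security holds in the form (1/n)·( Σ_{j=1}^{k} Σ_{i=1}^{n} α(v_i, s_j) + r·Δ ) > π with π > 0. Then the number of validators satisfies n < (θ + r)·Δ / π. -/

import Mathlib

open Finset

lemma mul_lt_of_lt_one_div_mul {n π x : ℝ} (hn : 0 ≤ n) (hπ : 0 < π) (h : π < 1 / n * x) :
    n * π < x := by
  rcases hn.eq_or_lt with rfl | hn
  -- `1 / 0 = 0`, so for `n = 0` the hypothesis reads `π < 0`.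
  · simp only [div_zero, zero_mul] at h
    exact absurd h hπ.not_gt
  · rwa [one_div_mul_eq_div, lt_div_iff₀ hn, mul_comm] at h

theorem validator_count_bound_general
    {V S : Type*} [Fintype V] [Fintype S]
    (ω α : V → S → ℝ) (θ r π : ℝ)
    (hπ : 0 < π)
    (hbelow : ∀ s, (∑ v, α v s) < θ * ∑ v, ω v s)
    (hstrong : π < (1 / (Fintype.card V : ℝ)) *
        ((∑ s, ∑ v, α v s) + r * (∑ s, ∑ v, ω v s))) :
    (Fintype.card V : ℝ) < (θ + r) * (∑ s, ∑ v, ω v s) / π := by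
  have hattack : ∑ s, ∑ v, α v s ≤ θ * ∑ s, ∑ v, ω v s := by
    rw [mul_sum]
    exact sum_le_sum fun s _ => (hbelow s).le
  have hcount := mul_lt_of_lt_one_div_mul (Nat.cast_nonneg _) hπ hstrong
  rw [lt_div_iff₀ hπ]
  linarith

/-- **Bound on the number of validators.** If attack stake stays strictly below the capture
threshold in every SSP and strong shared security holds
(`(1/n)·(Σ_j Σ_i α + r·Δ) > π` with `π > 0`), then `n < (θ + r)·Δ / π`. -/
theorem validator_count_bound
    {V S : Type*} [Fintype V] [Fintype S] [Nonempty V] [Nonempty S]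
    (ω α : V → S → ℝ) (θ r π : ℝ)
    (hωnonneg : ∀ v s, 0 ≤ ω v s)
    (hαnonneg : ∀ v s, 0 ≤ α v s)
    (hαle : ∀ v s, α v s ≤ ω v s)
    (hθ0 : 0 < θ) (hθ1 : θ < 1) (hr : 0 < r) (hπ : 0 < π)
    (hbelow : ∀ s, (∑ v, α v s) < θ * ∑ v, ω v s)
    (hstrong : π < (1 / (Fintype.card V : ℝ)) *
        ((∑ s, ∑ v, α v s) + r * (∑ s, ∑ v, ω v s))) :
    (Fintype.card V : ℝ) < (θ + r) * (∑ s, ∑ v, ω v s) / π :=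
  validator_count_bound_general ω α θ r π hπ hbelow hstrong
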